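/- In the setting of the simplicial lemma for a torsor, if 1 → H → G → F → 1 is an exact sequence of group objects and G is regarded as an H_F-torsor over F via right translation through i : H → G, then the connecting map φ : F(G) → F(H) of the lemma equals F(i). -/

import Mathlib

open AlgebraicGeometry CategoryTheory Opposite Limits

universe u

structure SchGroupOver (S : Scheme.{u}) where
  X : Over S
  grp : ∀ T : Over S, Group (T ⟶ X)
  comp_mul : ∀ {T T' : Over S} (f : T' ⟶ T) (a b : T ⟶ X),
    letI := grp T; letI := grp T'
    f ≫ (a * b) = (f ≫ a) * (f ≫ b)

attribute [instance] SchGroupOver.grp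

variable {S : Scheme.{u}}

structure SchGroupHom (G H : SchGroupOver S) where
  hom : G.X ⟶ H.X
  map_mul : ∀ (T : Over S) (a b : T ⟶ G.X), (a * b) ≫ hom = (a ≫ hom) * (b ≫ hom)

/-- A morphism of schemes is flat if all of its stalk maps are flat. -/
def IsFlatMorphism {X Y : Scheme.{u}} (f : X ⟶ Y) : Prop :=
  ∀ x : X, letI := (f.stalkMap x).hom.toAlgebra
    Module.Flat (Y.presheaf.stalk (f.base x)) (X.presheaf.stalk x)

/-! Write `σ^* x = ψ(y, z)`, so that `φ x = z`, and pull this identity back along the unit section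
`t : H → G ×_S H`, `h ↦ (1, h)`. Since `σ ∘ t = i`, the right side becomes `i^* x`. On the left,
`pr_H ∘ t = id` returns `z`, while `pr_G ∘ t` is the unit section of `G`, which factors through
`S` and hence kills `y` because `F(S) = 0`. -/

namespace SchGroupOver

variable (G : SchGroupOver S)

def precompMonoidHom {T T' : Over S} (f : T' ⟶ T) : (T ⟶ G.X) →* (T' ⟶ G.X) :=
  MonoidHom.mk' (f ≫ ·) (G.comp_mul f)

lemma comp_one {T T' : Over S} (f : T' ⟶ T) : f ≫ (1 : T ⟶ G.X) = 1 :=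
  map_one (G.precompMonoidHom f)

lemma map_one_eq_zero (P : (Over S)ᵒᵖ ⥤ AddCommGrpCat.{u})
    (hP0 : IsZero (P.obj (op (Over.mk (𝟙 S))))) (T : Over S) :
    P.map (1 : T ⟶ G.X).op = 0 := by
  rw [← G.comp_one (Over.mkIdTerminal.from T), op_comp, P.map_comp,
    hP0.eq_zero_of_tgt (P.map _), zero_comp]

variable (Y : Over S)

noncomputable def unitSection : Y ⟶ Over.mk (pullback.fst G.X.hom Y.hom ≫ G.X.hom) :=
  Over.homMk (pullback.lift (1 : Y ⟶ G.X).left (𝟙 Y.left) (by simp))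
    (by simp only [Over.mk_hom, pullback.lift_fst_assoc, Over.w])

@[simp]
lemma unitSection_fst :
    G.unitSection Y ≫ Over.homMk (pullback.fst G.X.hom Y.hom) rfl = 1 := by
  ext1; exact pullback.lift_fst _ _ _

@[simp]
lemma unitSection_snd :
    G.unitSection Y ≫ Over.homMk (pullback.snd G.X.hom Y.hom) pullback.condition.symm =
      𝟙 Y := by
  ext1; exact pullback.lift_snd _ _ _

lemma unitSection_translate (f : Y ⟶ G.X) :
    G.unitSection Y ≫ (Over.homMk (pullback.fst G.X.hom Y.hom) rfl *
      (Over.homMk (pullback.snd G.X.hom Y.hom) pullback.condition.symm ≫ f)) = f := by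
  rw [G.comp_mul, unitSection_fst, ← Category.assoc, unitSection_snd, Category.id_comp, one_mul]

end SchGroupOver

theorem phi_eq_F_of_i_for_group_extension_general
    (H G : SchGroupOver S) (i : SchGroupHom H G)
    -- the abelian presheaf `F` (here `P`) with `P(S) = 0`
    (P : (Over S)ᵒᵖ ⥤ AddCommGrpCat.{u})
    (hP0 : IsZero (P.obj (op (Over.mk (𝟙 S))))) :
    -- `G ×_S H` with its two projections, as an `S`-scheme
    letI OvGH : Over S := Over.mk (pullback.fst G.X.hom H.X.hom ≫ G.X.hom)
    letI a : OvGH ⟶ G.X := Over.homMk (pullback.fst G.X.hom H.X.hom) rfl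
    letI b : OvGH ⟶ H.X := Over.homMk (pullback.snd G.X.hom H.X.hom)
      pullback.condition.symm
    -- the right-translation action `σ : G ×_S H ⟶ G`, `(g, h) ↦ g · i(h)`
    letI σOv : OvGH ⟶ G.X := a * (b ≫ i.hom)
    -- the sum map `ψ_{G,H}`
    letI ψGH : ↑(P.obj (op G.X)) × ↑(P.obj (op H.X)) → ↑(P.obj (op OvGH)) :=
      fun q => P.map a.op q.1 + P.map b.op q.2
    ∀ hψ : Function.Bijective ψGH,
      ∀ x : ↑(P.obj (op G.X)),
        ((Equiv.ofBijective ψGH hψ).symm (P.map σOv.op x)).2 = P.map i.hom.op x := by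
  intro hψ x
  generalize hq : (Equiv.ofBijective _ hψ).symm _ = q
  rw [Equiv.symm_apply_eq, Equiv.ofBijective_apply] at hq
  have := congrArg (P.map (G.unitSection H.X).op) hq
  simp only [map_add, ← ConcreteCategory.comp_apply, ← P.map_comp, ← op_comp] at this
  simpa [G.unitSection_translate, G.map_one_eq_zero P hP0] using this.symm

theorem phi_eq_F_of_i_for_group_extension
    (H G K : SchGroupOver S) (i : SchGroupHom H G) (p : SchGroupHom G K)
    -- exactness of `1 → H → G → K → 1` as fppf sheaves
    (hinj : ∀ T : Over S, Function.Injective (fun a : T ⟶ H.X => a ≫ i.hom))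
    (hker : ∀ (T : Over S) (b : T ⟶ G.X), b ≫ p.hom = 1 ↔ ∃ a : T ⟶ H.X, a ≫ i.hom = b)
    (hpflat : IsFlatMorphism p.hom.left) [AlgebraicGeometry.Surjective p.hom.left]
    [LocallyOfFinitePresentation p.hom.left]
    -- the abelian presheaf `F` (here `P`) with `P(S) = 0`
    (P : (Over S)ᵒᵖ ⥤ AddCommGrpCat.{u})
    (hP0 : IsZero (P.obj (op (Over.mk (𝟙 S))))) :
    -- `G ×_S H` with its two projections, as an `S`-scheme
    letI OvGH : Over S := Over.mk (pullback.fst G.X.hom H.X.hom ≫ G.X.hom)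
    letI a : OvGH ⟶ G.X := Over.homMk (pullback.fst G.X.hom H.X.hom) rfl
    letI b : OvGH ⟶ H.X := Over.homMk (pullback.snd G.X.hom H.X.hom)
      pullback.condition.symm
    -- the right-translation action `σ : G ×_S H ⟶ G`, `(g, h) ↦ g · i(h)`
    letI σOv : OvGH ⟶ G.X := a * (b ≫ i.hom)
    -- the sum map `ψ_{G,H}`
    letI ψGH : ↑(P.obj (op G.X)) × ↑(P.obj (op H.X)) → ↑(P.obj (op OvGH)) :=
      fun q => P.map a.op q.1 + P.map b.op q.2
    ∀ hψ : Function.Bijective ψGH,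
      ∀ x : ↑(P.obj (op G.X)),
        ((Equiv.ofBijective ψGH hψ).symm (P.map σOv.op x)).2 = P.map i.hom.op x :=
  phi_eq_F_of_i_for_group_extension_general H G i P hP0
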